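/- arXiv:1705.06881 — 3 statements merged into one kernel-verified Lean document; each statement's English description precedes it below -/
import Mathlib

section
/- Let L ∈ ℝ and κ > 0, and let b : ℝ → ℝ be continuously differentiable on (−∞, L] with b(y)² + b'(y) ≤ 2κ for all y ≤ L. Then b(y) ≤ √(2κ) for all y ≤ L. -/
/-!
Reflecting `y ↦ -y` turns the Riccati inequality `b' ≤ 2κ - b²` on `(-∞, L]` into
`g' ≥ g² - 2κ` on `[-L, ∞)`. If `g` ever exceeds `√(2κ)`, say `g t₀ = M`, it can never
drop back below `M` (its derivative is positive at level `M`), so `g' ≥ δ g²` with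
`δ = 1 - 2κ / M² > 0` from `t₀` on. Then `(1 / g)' ≤ -δ`, and `1 / g` would have to become
nonpositive in finite time, which is impossible for `g ≥ M > 0`.
-/

open Set

theorem HasDerivWithinAt.comp_neg_Ici {f : ℝ → ℝ} {f' x L : ℝ}
    (hf : HasDerivWithinAt f f' (Iic L) (-x)) :
    HasDerivWithinAt (fun t => f (-t)) (-f') (Ici (-L)) x := by
  have hneg : HasDerivWithinAt (fun t : ℝ => -t) (-1) (Ici (-L)) x :=
    (hasDerivAt_id x).neg.hasDerivWithinAt
  have hmaps : MapsTo (fun t : ℝ => -t) (Ici (-L)) (Iic L) :=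
    fun _ ht => mem_Iic.mpr (neg_le.mp ht)
  simpa [Function.comp_def] using hf.comp x hneg hmaps

section Riccati

variable {g g' : ℝ → ℝ} {a : ℝ}

theorem image_le_image_of_sq_sub_le_deriv {k : ℝ}
    (hg : ∀ t ∈ Ici a, HasDerivWithinAt g (g' t) (Ici a) t)
    (hineq : ∀ t ∈ Ici a, g t ^ 2 - k ≤ g' t) (hk : k < g a ^ 2) :
    ∀ t ∈ Ici a, g a ≤ g t := by
  intro t ht
  have hcont : ContinuousOn g (Icc a t) := fun x hx =>
    (hg x hx.1).continuousWithinAt.mono Icc_subset_Ici_self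
  have hneg := image_le_of_deriv_right_lt_deriv_boundary' (f := fun x => -g x)
    (f' := fun x => -g' x) (B := fun _ => -g a) (B' := fun _ => 0) hcont.neg
    (fun x hx => (hg x hx.1).neg.mono (Ici_subset_Ici.mpr hx.1)) le_rfl continuousOn_const
    (fun _ _ => hasDerivWithinAt_const _ _ _)
    (fun x hx hgx => by
      have hlevel := hineq x hx.1
      rw [neg_inj.mp hgx] at hlevel
      linarith)
    (right_mem_Icc.mpr ht)
  simpa using hneg

theorem exists_nonpos_of_mul_sq_le_deriv {δ : ℝ} (hδ : 0 < δ)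
    (hg : ∀ t ∈ Ici a, HasDerivWithinAt g (g' t) (Ici a) t)
    (hineq : ∀ t ∈ Ici a, δ * g t ^ 2 ≤ g' t) :
    ∃ t ∈ Ici a, g t ≤ 0 := by
  by_contra! hpos
  have hinv : ∀ t ∈ Ici a, HasDerivWithinAt (fun x => (g x)⁻¹) (-g' t / g t ^ 2) (Ici a) t :=
    fun t ht => (hg t ht).inv (hpos t ht).ne'
  have hslope : ∀ t ∈ Ici a, -g' t / g t ^ 2 ≤ -δ := fun t ht => by
    have hgt := hpos t ht
    rw [div_le_iff₀ (by positivity)]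
    linarith [hineq t ht]
  set T := a + (g a)⁻¹ / δ
  have hT : a ≤ T := le_add_of_nonneg_right (by have := hpos a (mem_Ici.mpr le_rfl); positivity)
  -- `1 / g` lies below the line through `(a, 1 / g a)` of slope `-δ`, which vanishes at `T`.
  have hline := image_le_of_deriv_right_le_deriv_boundary (f := fun x => (g x)⁻¹)
    (B := fun x => (g a)⁻¹ - δ * (x - a)) (B' := fun _ => -δ)
    (fun x hx => (hinv x hx.1).continuousWithinAt.mono Icc_subset_Ici_self)
    (fun x hx => (hinv x hx.1).mono (Ici_subset_Ici.mpr hx.1)) (by simp) (by fun_prop)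
    (fun x _ => by simpa using ((hasDerivWithinAt_id x _).sub_const a).const_mul δ |>.const_sub _)
    (fun x hx => hslope x hx.1) (right_mem_Icc.mpr hT)
  have hzero : (g a)⁻¹ - δ * (T - a) = 0 := by simp only [T]; field_simp; ring
  simp only [hzero] at hline
  exact (inv_pos.mpr (hpos T hT)).not_ge hline

theorem le_sqrt_of_sq_sub_le_deriv {k : ℝ} (hk : 0 ≤ k)
    (hg : ∀ t ∈ Ici a, HasDerivWithinAt g (g' t) (Ici a) t)
    (hineq : ∀ t ∈ Ici a, g t ^ 2 - k ≤ g' t) :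
    ∀ t ∈ Ici a, g t ≤ Real.sqrt k := by
  intro t₀ ht₀
  by_contra! hM
  have hM0 : 0 < g t₀ := (Real.sqrt_nonneg k).trans_lt hM
  have hkM : k < g t₀ ^ 2 := (Real.sqrt_lt' hM0).mp hM
  have hsub : Ici t₀ ⊆ Ici a := Ici_subset_Ici.mpr ht₀
  have hg₀ : ∀ t ∈ Ici t₀, HasDerivWithinAt g (g' t) (Ici t₀) t :=
    fun t ht => (hg t (hsub ht)).mono hsub
  have hge := image_le_image_of_sq_sub_le_deriv hg₀ (fun t ht => hineq t (hsub ht)) hkM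
  set δ := (g t₀ ^ 2 - k) / g t₀ ^ 2
  have hδ : 0 < δ := div_pos (by linarith) (by positivity)
  have hδg : ∀ t ∈ Ici t₀, δ * g t ^ 2 ≤ g' t := fun t ht => by
    have hsq : g t₀ ^ 2 ≤ g t ^ 2 := pow_le_pow_left₀ hM0.le (hge t ht) 2
    have hδk : δ * g t ^ 2 ≤ g t ^ 2 - k := by
      simp only [δ]
      rw [div_mul_eq_mul_div, div_le_iff₀ (by positivity)]
      nlinarith
    exact hδk.trans (hineq t (hsub ht))
  obtain ⟨t, ht, hgt⟩ := exists_nonpos_of_mul_sq_le_deriv hδ hg₀ hδg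
  linarith [hge t ht]

end Riccati

theorem stmt_7_general (L κ : ℝ) (hκ : 0 < κ) (b b' : ℝ → ℝ)
    (hderiv : ∀ y ∈ Set.Iic L, HasDerivWithinAt b (b' y) (Set.Iic L) y)
    (hbound : ∀ y ∈ Set.Iic L, b y ^ 2 + b' y ≤ 2 * κ) :
    ∀ y ∈ Set.Iic L, b y ≤ Real.sqrt (2 * κ) := by
  have hrefl := le_sqrt_of_sq_sub_le_deriv (g := fun t => b (-t)) (g' := fun t => -b' (-t))
    (a := -L) (k := 2 * κ) (by positivity)
    (fun t ht => (hderiv (-t) (mem_Iic.mpr (neg_le.mp ht))).comp_neg_Ici)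
    (fun t ht => by linarith [hbound (-t) (mem_Iic.mpr (neg_le.mp ht))])
  intro y hy
  simpa using hrefl (-y) (mem_Ici.mpr (neg_le_neg hy))

/-- If `b` is continuously differentiable on `(−∞, L]` with `b² + b' ≤ 2κ` there,
then `b ≤ √(2κ)` on `(−∞, L]`. -/
theorem stmt_7 (L κ : ℝ) (hκ : 0 < κ) (b b' : ℝ → ℝ)
    (hderiv : ∀ y ∈ Set.Iic L, HasDerivWithinAt b (b' y) (Set.Iic L) y)
    (hcont : ContinuousOn b' (Set.Iic L))
    (hbound : ∀ y ∈ Set.Iic L, b y ^ 2 + b' y ≤ 2 * κ) :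
    ∀ y ∈ Set.Iic L, b y ≤ Real.sqrt (2 * κ) :=
  stmt_7_general L κ hκ b b' hderiv hbound
end

section
/- Let L ∈ ℝ, x < L and κ > 0, and let b : ℝ → ℝ be continuously differentiable on (−∞, L] with 0 ≤ (b(y)² + b'(y))/2 ≤ κ for all y ≤ L. Define β(y) := ∫₀^y b(u) du and, for an integer k ≥ 1, set x_i := x + i(L−x)/k for i = 0, 1, …, k. Then ∑_{i=1}^k exp( β(x_i) − β(x_{i−1}) ) ≤ k · exp( (L−x)√(2κ)/k ). In particular, for the choice k = ⌊(L−x)√(2κ)⌋ + 1, one has ∑_{i=1}^k exp( β(x_i) − β(x_{i−1}) ) ≤ (⌊(L−x)√(2κ)⌋ + 1) · e. -/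
/-! The bound follows from `b ≤ √(2κ)` on `(−∞, L]`, which makes every increment
`β(x_i) − β(x_{i−1})` at most `√(2κ) (L − x) / k`. With `s = √(2κ)` this is a comparison
principle for the Riccati inequality `b' ≤ s² − b²`: if `B` is a primitive of `b`, then
`(b − s) e^{B + s y}` is nonincreasing, so `b(y₀) > s` would keep `(e^B)' = b e^B` above a
positive constant on `(−∞, y₀]`, and `e^B` would turn negative far enough to the left. -/

open Real MeasureTheory intervalIntegral
open Set

theorem hasDerivAt_integral_of_continuousOn_Iio {f : ℝ → ℝ} {a L y : ℝ}
    (hf : ContinuousOn f (Iio L)) (ha : a < L) (hy : y < L) :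
    HasDerivAt (fun t => ∫ u in a..t, f u) (f y) y :=
  integral_hasDerivAt_right ((hf.mono (ordConnected_Iio.uIcc_subset ha hy)).intervalIntegrable)
    (hf.stronglyMeasurableAtFilter isOpen_Iio y hy) (hf.continuousAt (Iio_mem_nhds hy))

theorem le_of_sq_add_deriv_le_of_hasDerivAt {b b' B : ℝ → ℝ} {L s : ℝ} (hs : 0 ≤ s)
    (hB : ∀ y < L, HasDerivAt B (b y) y) (hb : ∀ y < L, HasDerivAt b (b' y) y)
    (hric : ∀ y < L, b y ^ 2 + b' y ≤ s ^ 2) {y₀ : ℝ} (hy₀ : y₀ < L) : b y₀ ≤ s := by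
  set g : ℝ → ℝ := fun y => (b y - s) * exp (B y + s * y)
  have hg : ∀ y < L, HasDerivAt g ((b' y + b y ^ 2 - s ^ 2) * exp (B y + s * y)) y :=
    fun y hy => by
      have := ((hb y hy).sub_const s).mul
        (((hB y hy).add ((hasDerivAt_id y).const_mul s)).exp)
      refine this.congr_deriv ?_
      simp only [id, Pi.add_apply]
      ring
  have g_anti : AntitoneOn g (Iio L) := by
    refine antitoneOn_of_hasDerivWithinAt_nonpos (convex_Iio L)
      (f' := fun y => (b' y + b y ^ 2 - s ^ 2) * exp (B y + s * y))
      (fun y hy => (hg y hy).continuousAt.continuousWithinAt) (fun y hy => ?_) (fun y hy => ?_)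
    · rw [interior_Iio] at hy ⊢
      exact (hg y hy).hasDerivWithinAt
    · rw [interior_Iio] at hy
      exact mul_nonpos_of_nonpos_of_nonneg (by linarith [hric y hy]) (exp_pos _).le
  by_contra! hbs
  have hg₀ : 0 < g y₀ := mul_pos (sub_pos.2 hbs) (exp_pos _)
  set c := g y₀ * exp (-(s * y₀))
  have hc : 0 < c := by positivity
  have hlow : ∀ u ≤ y₀, c ≤ exp (B u) * b u := by
    intro u hu
    have hgu : g y₀ ≤ g u := g_anti (hu.trans_lt hy₀) hy₀ hu
    calc c ≤ g u * exp (-(s * u)) :=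
          mul_le_mul hgu (exp_le_exp.2 (by nlinarith)) (exp_pos _).le (hg₀.trans_le hgu).le
      _ = (b u - s) * exp (B u) := by
          simp only [g]; rw [mul_assoc, ← exp_add]; ring_nf
      _ ≤ exp (B u) * b u := by nlinarith [exp_pos (B u)]
  have φ_mono : MonotoneOn (fun y => exp (B y) - c * y) (Iic y₀) := by
    have hφ : ∀ y ≤ y₀, HasDerivAt (fun y => exp (B y) - c * y) (exp (B y) * b y - c) y :=
      fun y hy => by
        refine (((hB y (hy.trans_lt hy₀)).exp).sub ((hasDerivAt_id' y).const_mul c)).congr_deriv ?_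
        ring
    refine monotoneOn_of_hasDerivWithinAt_nonneg (convex_Iic y₀)
      (f' := fun y => exp (B y) * b y - c)
      (fun y hy => (hφ y hy).continuousAt.continuousWithinAt) (fun y hy => ?_) (fun y hy => ?_)
    · rw [interior_Iic] at hy ⊢
      exact (hφ y hy.le).hasDerivWithinAt
    · rw [interior_Iic] at hy
      linarith [hlow y hy.le]
  have hy : y₀ - exp (B y₀) / c ≤ y₀ := by linarith [div_pos (exp_pos (B y₀)) hc]
  have := φ_mono hy self_mem_Iic hy
  simp only [mul_sub, mul_div_cancel₀ _ hc.ne'] at this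
  linarith [exp_pos (B (y₀ - exp (B y₀) / c))]

theorem le_of_sq_add_deriv_le {b b' : ℝ → ℝ} {L s : ℝ} (hs : 0 ≤ s)
    (hb : ∀ y ∈ Iic L, HasDerivWithinAt b (b' y) (Iic L) y)
    (hric : ∀ y ∈ Iic L, b y ^ 2 + b' y ≤ s ^ 2) : ∀ y ∈ Iic L, b y ≤ s := by
  have hcont : ContinuousOn b (Iic L) := fun y hy => (hb y hy).continuousWithinAt
  have hlt : ∀ y ∈ Iio L, b y ≤ s := fun y hy =>
    le_of_sq_add_deriv_le_of_hasDerivAt hs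
      (fun y hy => hasDerivAt_integral_of_continuousOn_Iio (hcont.mono Iio_subset_Iic_self)
        (sub_one_lt L) hy)
      (fun y hy => (hb y hy.le).hasDerivAt (Iic_mem_nhds hy)) (fun y hy => hric y hy.le) hy
  intro y hy
  rcases (mem_Iic.1 hy).lt_or_eq with hy | rfl
  · exact hlt y hy
  · exact ContinuousWithinAt.closure_le (by simp) ((hcont y hy).mono Iio_subset_Iic_self)
      continuousWithinAt_const hlt

theorem integral_sub_integral_le_mul {f : ℝ → ℝ} {a c d s : ℝ} (hs : 0 ≤ s) (hcd : c ≤ d)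
    (hf : IntervalIntegrable f volume c d) (hfs : ∀ u ∈ Icc c d, f u ≤ s) :
    (∫ u in a..d, f u) - ∫ u in a..c, f u ≤ s * (d - c) := by
  by_cases hac : IntervalIntegrable f volume a c
  · rw [integral_interval_sub_left (hac.trans hf) hac]
    calc (∫ u in c..d, f u) ≤ ∫ _ in c..d, s :=
          integral_mono_on hcd hf intervalIntegrable_const hfs
      _ = s * (d - c) := by simp [mul_comm]
  · -- both integrals are junk `0`
    have had : ¬ IntervalIntegrable f volume a d := fun had => hac (had.trans hf.symm)
    rw [integral_undef had, integral_undef hac, sub_zero]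
    exact mul_nonneg hs (sub_nonneg.2 hcd)

theorem sum_exp_sub_le_of_sub_le {F : ℝ → ℝ} {x L s : ℝ} (hx : x ≤ L)
    (hF : ∀ c d, c ≤ d → d ≤ L → F d - F c ≤ s * (d - c)) (k : ℕ) :
    ∑ i ∈ Finset.Icc 1 k, exp (F (x + i * (L - x) / k) - F (x + ((i : ℝ) - 1) * (L - x) / k))
      ≤ k * exp ((L - x) * s / k) := by
  calc _ ≤ ∑ _i ∈ Finset.Icc 1 k, exp ((L - x) * s / k) := Finset.sum_le_sum fun i hi => ?_
    _ = k * exp ((L - x) * s / k) := by simp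
  obtain ⟨hi1, hik⟩ := Finset.mem_Icc.1 hi
  have hk : (0 : ℝ) < k := by exact_mod_cast hi1.trans hik
  have hik' : (i : ℝ) ≤ k := by exact_mod_cast hik
  have hlast : x + i * (L - x) / k ≤ L := by
    have : i * (L - x) / k ≤ L - x := by
      rw [div_le_iff₀ hk]; nlinarith
    linarith
  gcongr
  calc _ ≤ s * ((x + i * (L - x) / k) - (x + ((i : ℝ) - 1) * (L - x) / k)) :=
        hF _ _ (by gcongr; linarith) hlast
    _ = (L - x) * s / k := by field_simp; ring

theorem stmt_9_general (L x κ : ℝ) (hx : x < L) (b b' : ℝ → ℝ)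
    (hderiv : ∀ y ∈ Set.Iic L, HasDerivWithinAt b (b' y) (Set.Iic L) y)
    (hbound : ∀ y ∈ Set.Iic L, 0 ≤ (b y ^ 2 + b' y) / 2 ∧ (b y ^ 2 + b' y) / 2 ≤ κ)
    (β : ℝ → ℝ) (hβ : ∀ y, β y = ∫ u in (0 : ℝ)..y, b u)
    (k : ℕ) :
    (∑ i ∈ Finset.Icc 1 k,
        Real.exp (β (x + i * (L - x) / k) - β (x + ((i : ℝ) - 1) * (L - x) / k)))
      ≤ k * Real.exp ((L - x) * Real.sqrt (2 * κ) / k) ∧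
    (k = ⌊(L - x) * Real.sqrt (2 * κ)⌋₊ + 1 →
      (∑ i ∈ Finset.Icc 1 k,
          Real.exp (β (x + i * (L - x) / k) - β (x + ((i : ℝ) - 1) * (L - x) / k)))
        ≤ (⌊(L - x) * Real.sqrt (2 * κ)⌋₊ + 1) * Real.exp 1) := by
  set s := √(2 * κ)
  have hκ : 0 ≤ κ := (hbound L self_mem_Iic).1.trans (hbound L self_mem_Iic).2
  have hcont : ContinuousOn b (Iic L) := fun y hy => (hderiv y hy).continuousWithinAt
  have hb : ∀ y ∈ Iic L, b y ≤ s := le_of_sq_add_deriv_le (sqrt_nonneg _) hderiv fun y hy => by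
    rw [sq_sqrt (by linarith)]; linarith [(hbound y hy).2]
  have hβs : ∀ c d, c ≤ d → d ≤ L → β d - β c ≤ s * (d - c) := fun c d hcd hdL => by
    rw [hβ, hβ]
    refine integral_sub_integral_le_mul (sqrt_nonneg _) hcd ?_ fun u hu => hb u (hu.2.trans hdL)
    exact (hcont.mono (ordConnected_Iic.uIcc_subset (hcd.trans hdL) hdL)).intervalIntegrable
  have hsplit := sum_exp_sub_le_of_sub_le hx.le hβs k
  refine ⟨hsplit, fun hk => hsplit.trans ?_⟩
  have hk0 : (0 : ℝ) < k := by rw [hk]; positivity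
  have hle : (L - x) * s / k ≤ 1 := by
    rw [div_le_one hk0, hk]; push_cast; exact (Nat.lt_floor_add_one _).le
  rw [← Nat.cast_add_one, ← hk]
  gcongr

/-- Space splitting: with `0 ≤ (b² + b')/2 ≤ κ` on `(−∞, L]`, `β(y) = ∫₀^y b` and
`x_i = x + i(L−x)/k`, one has `∑_{i=1}^k exp(β(x_i) − β(x_{i−1})) ≤ k exp((L−x)√(2κ)/k)`;
for `k = ⌊(L−x)√(2κ)⌋ + 1` the bound is `(⌊(L−x)√(2κ)⌋ + 1)·e`. -/
theorem stmt_9 (L x κ : ℝ) (hx : x < L) (hκ : 0 < κ) (b b' : ℝ → ℝ)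
    (hderiv : ∀ y ∈ Set.Iic L, HasDerivWithinAt b (b' y) (Set.Iic L) y)
    (hcont : ContinuousOn b' (Set.Iic L))
    (hbound : ∀ y ∈ Set.Iic L, 0 ≤ (b y ^ 2 + b' y) / 2 ∧ (b y ^ 2 + b' y) / 2 ≤ κ)
    (β : ℝ → ℝ) (hβ : ∀ y, β y = ∫ u in (0 : ℝ)..y, b u)
    (k : ℕ) (hk : 1 ≤ k) :
    (∑ i ∈ Finset.Icc 1 k,
        Real.exp (β (x + i * (L - x) / k) - β (x + ((i : ℝ) - 1) * (L - x) / k)))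
      ≤ k * Real.exp ((L - x) * Real.sqrt (2 * κ) / k) ∧
    (k = ⌊(L - x) * Real.sqrt (2 * κ)⌋₊ + 1 →
      (∑ i ∈ Finset.Icc 1 k,
          Real.exp (β (x + i * (L - x) / k) - β (x + ((i : ℝ) - 1) * (L - x) / k)))
        ≤ (⌊(L - x) * Real.sqrt (2 * κ)⌋₊ + 1) * Real.exp 1) :=
  stmt_9_general L x κ hx b b' hderiv hbound β hβ k
end

section
/- Let (Ω, 𝓕, P) be a probability space carrying an i.i.d. sequence of pairs (N_n, C_n)_{n≥1}, where each N_n is a nonnegative integrable real random variable and each C_n takes values in {0,1}. Let p := P(C₁ = 1) and assume p > 0. Define I := inf{n ≥ 1 : C_n = 1}. Then the random variable ∑_{n=1}^{I} N_n is integrable and E[ ∑_{n=1}^{I} N_n ] ≤ (2/p) · E[N₁]. -/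
/-!
Write `∑_{i=1}^{I} N_i = ∑_{n ≥ 0} 1{I > n} N_{n+1}`. The event `{I > n} = {C_1 = ⋯ = C_n = 0}`
depends only on the first `n` trials, so it is independent of `N_{n+1}` even though `N_{n+1}` may
depend on `C_{n+1}`, and it has probability `(1 - p)^n`. Summing the geometric series gives Wald's
bound `E[∑_{i=1}^{I} N_i] ≤ E[N₁] / p`, which is at most `(2 / p) E[N₁]`.
-/

open MeasureTheory ProbabilityTheory
open scoped ENNReal

section General

variable {Ω : Type*} [MeasurableSpace Ω] {P : Measure Ω}

lemma measurable_sInf_setOf_mem {s : ℕ → Set Ω} (hs : ∀ n, MeasurableSet (s n)) :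
    Measurable fun ω => sInf {n | ω ∈ s n} := by
  refine measurable_of_Ioi fun m => ?_
  have hpre : (fun ω => sInf {n | ω ∈ s n}) ⁻¹' Set.Ioi m = (⋃ n, s n) ∩ ⋂ k ≤ m, (s k)ᶜ := by
    ext ω
    simp only [Set.mem_preimage, Set.mem_Ioi, Set.mem_inter_iff, Set.mem_iUnion, Set.mem_iInter,
      Set.mem_compl_iff]
    constructor
    · intro h
      exact ⟨Nat.nonempty_of_pos_sInf ((Nat.zero_le m).trans_lt h),
        fun k hk => Nat.notMem_of_lt_sInf (s := {n | ω ∈ s n}) (hk.trans_lt h)⟩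
    · rintro ⟨hne, hlow⟩
      by_contra! hle
      exact hlow _ hle (Nat.sInf_mem hne)
  rw [hpre]
  exact .inter (.iUnion hs) (.biInter (Set.to_countable _) fun k _ => (hs k).compl)

lemma measurable_sum_Icc_of_measurable_bound {N : ℕ → Ω → ℝ} (hN : ∀ n, Measurable (N n))
    {I : Ω → ℕ} (hI : Measurable I) : Measurable fun ω => ∑ i ∈ Finset.Icc 1 (I ω), N i ω := by
  have hsum : Measurable fun q : Ω × ℕ => ∑ i ∈ Finset.Icc 1 q.2, N i q.1 :=
    measurable_from_prod_countable_left fun m =>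
      Finset.measurable_sum (Finset.Icc 1 m) fun i _ => hN i
  exact hsum.comp (measurable_id.prodMk hI)

lemma lintegral_indicator_preimage_of_indepFun {β : Type*} [MeasurableSpace β]
    {f : Ω → ℝ≥0∞} {Y : Ω → β} {B : Set β} (hf : Measurable f) (hY : Measurable Y)
    (hB : MeasurableSet B) (hfY : IndepFun f Y P) :
    ∫⁻ ω, (Y ⁻¹' B).indicator f ω ∂P = P (Y ⁻¹' B) * ∫⁻ ω, f ω ∂P := by
  have hind : IndepFun f ((Y ⁻¹' B).indicator (1 : Ω → ℝ≥0∞)) P := by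
    have h := hfY.comp measurable_id ((measurable_one : Measurable (1 : β → ℝ≥0∞)).indicator hB)
    exact h
  calc ∫⁻ ω, (Y ⁻¹' B).indicator f ω ∂P = ∫⁻ ω, f ω * (Y ⁻¹' B).indicator 1 ω ∂P := by
        congr with ω
        by_cases hω : ω ∈ Y ⁻¹' B <;> simp [hω]
    _ = P (Y ⁻¹' B) * ∫⁻ ω, f ω ∂P := by
        rw [lintegral_mul_eq_lintegral_mul_lintegral_of_indepFun'' hf.aemeasurable
          (measurable_one.indicator (hY hB)).aemeasurable hind, lintegral_indicator_one (hY hB),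
          mul_comm]

lemma integrable_and_integral_le_of_lintegral_ofReal_le {F : Ω → ℝ}
    (hF : AEStronglyMeasurable F P) (hF0 : 0 ≤ᵐ[P] F) {c : ℝ≥0∞} (hc : c ≠ ∞)
    (h : ∫⁻ ω, ENNReal.ofReal (F ω) ∂P ≤ c) :
    Integrable F P ∧ ∫ ω, F ω ∂P ≤ c.toReal := by
  refine ⟨⟨hF, (hasFiniteIntegral_iff_ofReal hF0).2 (h.trans_lt hc.lt_top)⟩, ?_⟩
  rw [integral_eq_lintegral_of_nonneg_ae hF0 hF]
  exact ENNReal.toReal_mono hc h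

end General

section FirstAcceptance

variable {Ω : Type*}

def noAcceptanceUpTo (C : ℕ → Ω → Bool) (n : ℕ) : Set Ω :=
  ⋂ k ∈ Finset.Icc 1 n, {ω | C k ω = false}

variable {C : ℕ → Ω → Bool}

lemma mem_noAcceptanceUpTo_of_lt_sInf {ω : Ω} {n : ℕ}
    (hn : n < sInf {k | 1 ≤ k ∧ C k ω = true}) : ω ∈ noAcceptanceUpTo C n := by
  simp only [noAcceptanceUpTo, Set.mem_iInter, Finset.mem_Icc]
  intro k hk
  simpa [hk.1] using Nat.notMem_of_lt_sInf (hk.2.trans_lt hn)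

lemma ofReal_sum_Icc_le_tsum_indicator {N : ℕ → Ω → ℝ} (hN0 : ∀ n ω, 0 ≤ N n ω) {ω : Ω} {m : ℕ}
    (hω : ∀ n < m, ω ∈ noAcceptanceUpTo C n) :
    ENNReal.ofReal (∑ i ∈ Finset.Icc 1 m, N i ω) ≤
      ∑' n, (noAcceptanceUpTo C n).indicator (fun ω => ENNReal.ofReal (N (n + 1) ω)) ω := by
  rw [ENNReal.ofReal_sum_of_nonneg fun i _ => hN0 i ω, ← Finset.Ico_add_one_right_eq_Icc,
    Finset.sum_Ico_eq_sum_range, Nat.add_sub_cancel]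
  calc ∑ n ∈ Finset.range m, ENNReal.ofReal (N (1 + n) ω)
      = ∑ n ∈ Finset.range m,
          (noAcceptanceUpTo C n).indicator (fun ω => ENNReal.ofReal (N (n + 1) ω)) ω := by
        refine Finset.sum_congr rfl fun n hn => ?_
        rw [Set.indicator_of_mem (hω n (Finset.mem_range.mp hn)), add_comm]
    _ ≤ _ := ENNReal.sum_le_tsum _

variable [MeasurableSpace Ω] {P : Measure Ω}

lemma measurableSet_noAcceptanceUpTo (hC : ∀ k, Measurable (C k)) (n : ℕ) :
    MeasurableSet (noAcceptanceUpTo C n) :=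
  .biInter (Set.to_countable _) fun k _ => hC k (measurableSet_singleton false)

lemma measure_noAcceptanceUpTo (hC : iIndepFun C P)
    (hident : ∀ k, 1 ≤ k → IdentDistrib (C k) (C 1) P P) (n : ℕ) :
    P (noAcceptanceUpTo C n) = P {ω | C 1 ω = false} ^ n := by
  calc P (noAcceptanceUpTo C n) = ∏ k ∈ Finset.Icc 1 n, P (C k ⁻¹' {false}) :=
        hC.meas_biInter fun k _ => ⟨{false}, measurableSet_singleton _, rfl⟩
    _ = ∏ k ∈ Finset.Icc 1 n, P (C 1 ⁻¹' {false}) := Finset.prod_congr rfl fun k hk =>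
        (hident k (Finset.mem_Icc.mp hk).1).measure_mem_eq (measurableSet_singleton false)
    _ = P {ω | C 1 ω = false} ^ n := by
        rw [Finset.prod_const, Nat.card_Icc, Nat.add_sub_cancel]
        rfl

variable {N : ℕ → Ω → ℝ}

lemma lintegral_indicator_noAcceptanceUpTo
    (hmeas : ∀ n, Measurable (fun ω => (N n ω, C n ω)))
    (hiid : iIndepFun (fun n ω => (N n ω, C n ω)) P) (n : ℕ) :
    ∫⁻ ω, (noAcceptanceUpTo C n).indicator (fun ω => ENNReal.ofReal (N (n + 1) ω)) ω ∂P =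
      P (noAcceptanceUpTo C n) * ∫⁻ ω, ENNReal.ofReal (N (n + 1) ω) ∂P := by
  set past : Ω → (Finset.Icc 1 n → Bool) := fun ω k => C k ω
  have hpast : noAcceptanceUpTo C n = past ⁻¹' {v | ∀ k, v k = false} := by
    ext ω
    simp [noAcceptanceUpTo, past]
  have hindep : IndepFun (fun ω => ENNReal.ofReal (N (n + 1) ω)) past P := by
    have h := hiid.indepFun_finset {n + 1} (Finset.Icc 1 n) (by simp) hmeas
    exact h.comp
      (φ := fun v : ({n + 1} : Finset ℕ) → ℝ × Bool =>
        ENNReal.ofReal (v ⟨n + 1, Finset.mem_singleton_self _⟩).1)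
      (ψ := fun (v : Finset.Icc 1 n → ℝ × Bool) k => (v k).2) (by fun_prop) (by fun_prop)
  rw [hpast]
  exact lintegral_indicator_preimage_of_indepFun (hmeas (n + 1)).fst.ennreal_ofReal
    (measurable_pi_lambda _ fun k => (hmeas k).snd) (by measurability) hindep

variable [IsProbabilityMeasure P]

lemma lintegral_ofReal_sum_Icc_firstAcceptance_le
    (hmeas : ∀ n, Measurable (fun ω => (N n ω, C n ω)))
    (hiid : iIndepFun (fun n ω => (N n ω, C n ω)) P)
    (hident : ∀ n, 1 ≤ n →
      IdentDistrib (fun ω => (N n ω, C n ω)) (fun ω => (N 1 ω, C 1 ω)) P P)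
    (hN0 : ∀ n ω, 0 ≤ N n ω) :
    ∫⁻ ω, ENNReal.ofReal (∑ i ∈ Finset.Icc 1 (sInf {k | 1 ≤ k ∧ C k ω = true}), N i ω) ∂P ≤
      (∫⁻ ω, ENNReal.ofReal (N 1 ω) ∂P) / P {ω | C 1 ω = true} := by
  set E₁ := ∫⁻ ω, ENNReal.ofReal (N 1 ω) ∂P
  have hC : iIndepFun C P := hiid.comp (fun _ => Prod.snd) fun _ => measurable_snd
  have hCident : ∀ k, 1 ≤ k → IdentDistrib (C k) (C 1) P P :=
    fun k hk => (hident k hk).comp measurable_snd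
  have hNident : ∀ k, 1 ≤ k → ∫⁻ ω, ENNReal.ofReal (N k ω) ∂P = E₁ :=
    fun k hk => ((hident k hk).comp measurable_fst.ennreal_ofReal).lintegral_eq
  have hreject : P {ω | C 1 ω = false} = 1 - P {ω | C 1 ω = true} := by
    have hacc : MeasurableSet {ω | C 1 ω = true} := (hmeas 1).snd (measurableSet_singleton true)
    rw [← prob_compl_eq_one_sub hacc]
    congr with ω
    simp
  calc _ ≤ ∫⁻ ω, ∑' n,
          (noAcceptanceUpTo C n).indicator (fun ω => ENNReal.ofReal (N (n + 1) ω)) ω ∂P :=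
        lintegral_mono fun ω => ofReal_sum_Icc_le_tsum_indicator hN0
          fun n hn => mem_noAcceptanceUpTo_of_lt_sInf hn
    _ = ∑' n, E₁ * P {ω | C 1 ω = false} ^ n := by
        rw [lintegral_tsum fun n => ((hmeas (n + 1)).fst.ennreal_ofReal.indicator
          (measurableSet_noAcceptanceUpTo (fun k => (hmeas k).snd) n)).aemeasurable]
        refine tsum_congr fun n => ?_
        rw [lintegral_indicator_noAcceptanceUpTo hmeas hiid, measure_noAcceptanceUpTo hC hCident,
          hNident _ n.succ_pos, mul_comm]
    _ = E₁ / P {ω | C 1 ω = true} := by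
        rw [ENNReal.tsum_mul_left, ENNReal.tsum_geometric, hreject,
          ENNReal.sub_sub_cancel ENNReal.one_ne_top prob_le_one, div_eq_mul_inv]

end FirstAcceptance

/-- For an i.i.d. sequence of pairs `(N_n, C_n)` with `N_n ≥ 0` integrable and
`p = P(C₁ = 1) > 0`, the random sum `∑_{n=1}^I N_n` up to the first acceptance
`I = inf{n ≥ 1 : C_n = 1}` is integrable with expectation at most `(2/p) E[N₁]`. -/
theorem stmt_10 {Ω : Type*} [MeasurableSpace Ω] (P : Measure Ω) [IsProbabilityMeasure P]
    (N : ℕ → Ω → ℝ) (C : ℕ → Ω → Bool)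
    (hmeas : ∀ n, Measurable (fun ω => (N n ω, C n ω)))
    (hiid : iIndepFun (fun n ω => (N n ω, C n ω)) P)
    (hident : ∀ n, 1 ≤ n →
      P.map (fun ω => (N n ω, C n ω)) = P.map (fun ω => (N 1 ω, C 1 ω)))
    (hN0 : ∀ n ω, 0 ≤ N n ω) (hint : ∀ n, Integrable (N n) P)
    (p : ℝ) (hp : p = (P {ω | C 1 ω = true}).toReal) (hppos : 0 < p)
    (I : Ω → ℕ) (hI : ∀ ω, I ω = sInf {n | 1 ≤ n ∧ C n ω = true}) :
    Integrable (fun ω => ∑ i ∈ Finset.Icc 1 (I ω), N i ω) P ∧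
    ∫ ω, (∑ i ∈ Finset.Icc 1 (I ω), N i ω) ∂P ≤ (2 / p) * ∫ ω, N 1 ω ∂P := by
  obtain rfl : I = fun ω => sInf {n | 1 ≤ n ∧ C n ω = true} := funext hI
  have hbound := lintegral_ofReal_sum_Icc_firstAcceptance_le hmeas hiid
    (fun n hn => ⟨(hmeas n).aemeasurable, (hmeas 1).aemeasurable, hident n hn⟩) hN0
  have hacc : P {ω | C 1 ω = true} ≠ 0 := fun h => by simp [h] at hp; linarith
  have hI_meas : Measurable fun ω => sInf {n | 1 ≤ n ∧ C n ω = true} :=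
    measurable_sInf_setOf_mem fun n =>
      (MeasurableSet.const _).inter ((hmeas n).snd (measurableSet_singleton true))
  obtain ⟨hF_int, hF_le⟩ := integrable_and_integral_le_of_lintegral_ofReal_le
    (measurable_sum_Icc_of_measurable_bound (fun n => (hmeas n).fst) hI_meas).aestronglyMeasurable
    (.of_forall fun ω => Finset.sum_nonneg fun i _ => hN0 i ω)
    (ENNReal.div_ne_top (hint 1).lintegral_lt_top.ne hacc) hbound
  refine ⟨hF_int, hF_le.trans ?_⟩
  rw [ENNReal.toReal_div, ← integral_eq_lintegral_of_nonneg_ae (.of_forall (hN0 1))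
    (hint 1).aestronglyMeasurable, ← hp, div_eq_inv_mul]
  have hE₁ : 0 ≤ ∫ ω, N 1 ω ∂P := integral_nonneg (hN0 1)
  gcongr
  rw [div_eq_mul_inv]
  linarith [inv_pos.2 hppos]
end
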